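/- Under the identifications for p = 1: a bounded sequence α satisfies |∑ₖ α(k)x₁(k)⋯xₙ(k)| ≤ C·‖x₁‖⋯‖xₙ‖ for all x₁,…,xₙ in the dual d(w,1)* of the Lorentz space d(w,1) if and only if α belongs to d(wⁿ,1), i.e., ∑ₖ α*(k)·w(k)ⁿ < ∞, and the best constant C equals ‖α‖_{d(wⁿ,1)} = ∑ₖ α*(k)w(k)ⁿ. -/

import Mathlib

/-- The decreasing rearrangement of (the moduli of) a bounded sequence:
`x*(k) = inf { sup_{j ∉ J} |x(j)| : |J| ≤ k }` (0-indexed). -/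
noncomputable def dRear (x : ℕ → ℂ) (k : ℕ) : ℝ :=
  sInf {s : ℝ | ∃ J : Finset ℕ, J.card ≤ k ∧ ∀ j ∉ J, ‖x j‖ ≤ s}

/-- Membership in `d(w,1)* = { x : sup_N (∑_{k<N} x*(k))/(∑_{k<N} w(k)) < ∞ }`, expressed via
finite subsets: `sup_{J finite} (∑_{k∈J} |x(k)|)/(∑_{k<|J|} w(k)) < ∞`. -/
def memDual (w : ℕ → ℝ) (x : ℕ → ℂ) : Prop :=
  BddAbove (Set.range fun J : Finset ℕ =>
    (∑ k ∈ J, ‖x k‖) / (∑ k ∈ Finset.range J.card, w k))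

/-- The norm of `d(w,1)*`. -/
noncomputable def nrmDual (w : ℕ → ℝ) (x : ℕ → ℂ) : ℝ :=
  ⨆ J : Finset ℕ, (∑ k ∈ J, ‖x k‖) / (∑ k ∈ Finset.range J.card, w k)

/-!
Write `p ≺ φ` when any `k` values of `p` sum to at most `φ 0 + ⋯ + φ (k - 1)`. The unit ball
of `d(w,1)*` is `{x : |x| ≺ w}`, and `|α| ≺ α*`. Abel summation along a decreasing enumeration
shows that `p ≺ φ` and `q ≺ ψ`, with `p ≥ 0` and `ψ` decreasing, give `p q ≺ φ ψ`; hence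
`|α| ∏ |xᵢ| ≺ α* wⁿ ∏ ‖xᵢ‖`, which bounds the form by `∑ α*(k) w(k)ⁿ ∏ ‖xᵢ‖`. Conversely, choose
greedily distinct `k₀, k₁, …` with `|α(kₘ)| > α*(m) - ε` and test the form on the single vector
`x(kₘ) = w(m) θₘ`, where the phase `θₘ` makes `α(kₘ) θₘⁿ` positive: `|x| ≺ w`, and the form
takes the value `∑ₘ |α(kₘ)| w(m)ⁿ ≥ ∑ₘ (α*(m) - ε) w(m)ⁿ`.
-/

open Finset

theorem sum_mul_le_sum_mul_of_sum_range_le {β b c : ℕ → ℝ} {N : ℕ}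
    (hβ : AntitoneOn β (Set.Iio N)) (hβ0 : ∀ m < N, 0 ≤ β m)
    (h : ∀ M ≤ N, ∑ m ∈ range M, b m ≤ ∑ m ∈ range M, c m) :
    ∑ m ∈ range N, β m * b m ≤ ∑ m ∈ range N, β m * c m := by
  have hD : ∀ M ≤ N, 0 ≤ ∑ m ∈ range M, (c m - b m) := fun M hM => by
    rw [sum_sub_distrib]; linarith [h M hM]
  rw [← sub_nonneg, ← sum_sub_distrib]
  simp_rw [← mul_sub]
  have := sum_range_by_parts β (fun m => c m - b m) N
  simp only [smul_eq_mul] at this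
  rw [this, sub_nonneg]
  rcases N.eq_zero_or_pos with rfl | hN
  · simp
  refine (sum_nonpos fun i hi => ?_).trans (mul_nonneg (hβ0 _ (by omega)) (hD N le_rfl))
  have hi := mem_range.mp hi
  exact mul_nonpos_of_nonpos_of_nonneg
    (sub_nonpos.mpr (hβ (by simp; omega) (by simp; omega) (by omega))) (hD _ (by omega))

/-- For antitone `φ` this is weak submajorization `p ≺_w φ`. -/
def Submajorized (p φ : ℕ → ℝ) : Prop :=
  ∀ J : Finset ℕ, ∑ k ∈ J, p k ≤ ∑ m ∈ range J.card, φ m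

theorem exists_enum_antitoneOn (J : Finset ℕ) (p : ℕ → ℝ) :
    ∃ e : ℕ → ℕ, Set.InjOn e (Set.Iio J.card) ∧ (range J.card).image e = J ∧
      AntitoneOn (p ∘ e) (Set.Iio J.card) := by
  set g : Fin J.card → ℕ := fun i => J.equivFin.symm i
  set σ := Tuple.sort (fun i => OrderDual.toDual (p (g i)))
  have hσ := Tuple.monotone_sort (fun i => OrderDual.toDual (p (g i)))
  have hg : Function.Injective g := fun a b h => J.equivFin.symm.injective (Subtype.ext h)
  refine ⟨fun m => if h : m < J.card then g (σ ⟨m, h⟩) else 0, ?_, ?_, ?_⟩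
  · intro a ha b hb hab
    simp only [Set.mem_Iio] at ha hb
    simpa [ha, hb, Fin.ext_iff] using σ.injective (hg (by simpa [ha, hb] using hab))
  · ext k
    simp only [mem_image, mem_range]
    constructor
    · rintro ⟨m, hm, rfl⟩
      simp [hm, g]
    · intro hk
      obtain ⟨i, hi⟩ := σ.surjective (J.equivFin ⟨k, hk⟩)
      exact ⟨i, i.2, by simp [g, hi]⟩
  · intro a ha b hb hab
    simp only [Set.mem_Iio] at ha hb
    simpa [ha, hb] using hσ (show (⟨a, ha⟩ : Fin J.card) ≤ ⟨b, hb⟩ from hab)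

namespace Submajorized

variable {p q φ ψ : ℕ → ℝ}

theorem sum_range_comp_le (h : Submajorized p φ) {e : ℕ → ℕ} {M : ℕ}
    (he : Set.InjOn e (Set.Iio M)) : ∑ m ∈ range M, p (e m) ≤ ∑ m ∈ range M, φ m := by
  have he' : Set.InjOn e (range M) := by simpa using he
  simpa [sum_image he', card_image_of_injOn he'] using h ((range M).image e)

theorem mul (hp : Submajorized p φ) (hq : Submajorized q ψ) (hp0 : ∀ k, 0 ≤ p k)
    (hψ : Antitone ψ) (hψ0 : ∀ m, 0 ≤ ψ m) : Submajorized (p * q) (φ * ψ) := by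
  intro J
  obtain ⟨e, he, himg, hpe⟩ := exists_enum_antitoneOn J p
  have he' : ∀ M ≤ J.card, Set.InjOn e (Set.Iio M) := fun M hM =>
    he.mono (Set.Iio_subset_Iio hM)
  calc ∑ k ∈ J, (p * q) k = ∑ m ∈ range J.card, p (e m) * q (e m) := by
        rw [← himg, sum_image (by simpa using he), card_image_of_injOn (by simpa using he),
          card_range]
        rfl
    _ ≤ ∑ m ∈ range J.card, p (e m) * ψ m :=
        sum_mul_le_sum_mul_of_sum_range_le hpe (fun m _ => hp0 _)
          (fun M hM => hq.sum_range_comp_le (he' M hM))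
    _ = ∑ m ∈ range J.card, ψ m * p (e m) := by simp only [mul_comm]
    _ ≤ ∑ m ∈ range J.card, ψ m * φ m :=
        sum_mul_le_sum_mul_of_sum_range_le (hψ.antitoneOn _) (fun m _ => hψ0 m)
          (fun M hM => hp.sum_range_comp_le (he' M hM))
    _ = ∑ m ∈ range J.card, (φ * ψ) m := by simp only [Pi.mul_apply, mul_comm]

theorem prod {ι : Type*} (s : Finset ι) {y ψ : ι → ℕ → ℝ}
    (hy : ∀ i, Submajorized (y i) (ψ i)) (hy0 : ∀ i k, 0 ≤ y i k)
    (hψ : ∀ i, Antitone (ψ i)) (hψ0 : ∀ i m, 0 ≤ ψ i m) :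
    Submajorized (∏ i ∈ s, y i) (∏ i ∈ s, ψ i) := by
  classical
  induction s using Finset.induction_on with
  | empty => intro J; simp
  | insert a s ha ih =>
    rw [prod_insert ha, prod_insert ha, mul_comm (y a), mul_comm (ψ a)]
    exact ih.mul (hy a) (fun k => by simpa [prod_apply] using prod_nonneg fun i _ => hy0 i k)
      (hψ a) (hψ0 a)

theorem of_exists_le (h : ∀ J : Finset ℕ, J.Nonempty → ∃ k ∈ J, p k ≤ φ (J.card - 1)) :
    Submajorized p φ := by
  intro J
  induction hN : J.card generalizing J with
  | zero => simp [card_eq_zero.mp hN]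
  | succ N ih =>
    obtain ⟨k, hk, hpk⟩ := h J (card_pos.mp (by omega))
    rw [← add_sum_erase J p hk, sum_range_succ, add_comm]
    rw [hN, Nat.add_sub_cancel] at hpk
    exact add_le_add (ih _ (by rw [card_erase_of_mem hk, hN, Nat.add_sub_cancel])) hpk

end Submajorized

theorem Antitone.submajorized_self {w : ℕ → ℝ} (hw : Antitone w) : Submajorized w w :=
  Submajorized.of_exists_le fun J hJ => ⟨J.max' hJ, J.max'_mem hJ, hw <| by
    have := card_le_card (show J ⊆ range (J.max' hJ + 1) from fun k hk =>
      mem_range.mpr (Nat.lt_succ_of_le (J.le_max' k hk)))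
    rw [card_range] at this
    omega⟩

section dRear

variable {α : ℕ → ℂ}

theorem bddBelow_dRear_set (m : ℕ) :
    BddBelow {s : ℝ | ∃ J : Finset ℕ, J.card ≤ m ∧ ∀ j ∉ J, ‖α j‖ ≤ s} := by
  refine ⟨0, fun s ⟨J, _, hs⟩ => ?_⟩
  obtain ⟨j, hj⟩ := J.exists_notMem
  exact (norm_nonneg _).trans (hs j hj)

theorem exists_notMem_dRear_sub_lt (J : Finset ℕ) {ε : ℝ} (hε : 0 < ε) :
    ∃ k ∉ J, dRear α J.card - ε < ‖α k‖ := by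
  by_contra! h
  have : dRear α J.card ≤ dRear α J.card - ε := csInf_le (bddBelow_dRear_set _) ⟨J, le_rfl, h⟩
  linarith

theorem exists_injective_dRear_sub_lt {ε : ℝ} (hε : 0 < ε) :
    ∀ N, ∃ j : Fin N → ℕ, Function.Injective j ∧ ∀ m : Fin N, dRear α m - ε < ‖α (j m)‖
  | 0 => ⟨Fin.elim0, fun i => i.elim0, fun i => i.elim0⟩
  | N + 1 => by
    obtain ⟨j, hj, hjα⟩ := exists_injective_dRear_sub_lt hε N
    obtain ⟨k, hk, hkα⟩ := exists_notMem_dRear_sub_lt (univ.image j) hε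
    rw [card_image_of_injective _ hj, card_univ, Fintype.card_fin] at hkα
    refine ⟨Fin.snoc j k, Fin.snoc_injective_of_injective hj (by simpa using hk),
      Fin.lastCases ?_ fun m => ?_⟩
    · simpa using hkα
    · simpa using hjα m

theorem le_dRear (hα : ∃ A : ℝ, ∀ k, ‖α k‖ ≤ A) {J : Finset ℕ} {m : ℕ} (hm : m < J.card) {c : ℝ}
    (hc : ∀ k ∈ J, c ≤ ‖α k‖) : c ≤ dRear α m := by
  obtain ⟨A, hA⟩ := hα
  refine le_csInf ⟨A, ∅, by simp, fun j _ => hA j⟩ ?_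
  rintro s ⟨J', hJ', hs⟩
  obtain ⟨k, hk, hk'⟩ := exists_mem_notMem_of_card_lt_card (hJ'.trans_lt hm)
  exact (hc k hk).trans (hs k hk')

theorem dRear_nonneg (hα : ∃ A : ℝ, ∀ k, ‖α k‖ ≤ A) (m : ℕ) : 0 ≤ dRear α m :=
  le_dRear hα (J := range (m + 1)) (by simp) fun _ _ => norm_nonneg _

theorem dRear_antitone (hα : ∃ A : ℝ, ∀ k, ‖α k‖ ≤ A) : Antitone (dRear α) := fun k l hkl => by
  obtain ⟨A, hA⟩ := hα
  exact csInf_le_csInf (bddBelow_dRear_set l) ⟨A, ∅, by simp, fun j _ => hA j⟩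
    fun s ⟨J, hJ, hs⟩ => ⟨J, hJ.trans hkl, hs⟩

theorem submajorized_norm_dRear (hα : ∃ A : ℝ, ∀ k, ‖α k‖ ≤ A) :
    Submajorized (‖α ·‖) (dRear α) :=
  Submajorized.of_exists_le fun J hJ => by
    obtain ⟨k, hk, hmin⟩ := J.exists_min_image (‖α ·‖) hJ
    exact ⟨k, hk, le_dRear hα (by have := hJ.card_pos; omega) hmin⟩

end dRear

theorem Complex.exists_norm_eq_one_mul_pow_eq_norm (z : ℂ) {n : ℕ} (hn : n ≠ 0) :
    ∃ θ : ℂ, ‖θ‖ = 1 ∧ z * θ ^ n = ‖z‖ := by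
  refine ⟨Complex.exp ((-z.arg / n : ℝ) * Complex.I), Complex.norm_exp_ofReal_mul_I _, ?_⟩
  have : (n : ℂ) * ((-z.arg / n : ℝ) * Complex.I) = -(z.arg * Complex.I) := by
    push_cast; field_simp
  rw [← Complex.exp_nat_mul, this]
  calc z * Complex.exp (-(z.arg * Complex.I))
      = ‖z‖ * (Complex.exp (z.arg * Complex.I) * Complex.exp (-(z.arg * Complex.I))) := by
        rw [← mul_assoc, Complex.norm_mul_exp_arg_mul_I]
    _ = ‖z‖ := by rw [← Complex.exp_add, add_neg_cancel, Complex.exp_zero, mul_one]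

section dual

variable {w : ℕ → ℝ} {x : ℕ → ℂ}

theorem sum_range_card_pos (hw : ∀ k, 0 < w k) {J : Finset ℕ} (hJ : J.Nonempty) :
    0 < ∑ m ∈ range J.card, w m :=
  sum_pos (fun m _ => hw m) (nonempty_range_iff.mpr hJ.card_pos.ne')

theorem le_nrmDual (hx : memDual w x) (J : Finset ℕ) :
    (∑ k ∈ J, ‖x k‖) / (∑ k ∈ range J.card, w k) ≤ nrmDual w x :=
  le_ciSup hx J

theorem nrmDual_nonneg (hx : memDual w x) : 0 ≤ nrmDual w x := by
  simpa using le_nrmDual hx ∅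

theorem submajorized_norm_nrmDual_smul (hw : ∀ k, 0 < w k) (hx : memDual w x) :
    Submajorized (‖x ·‖) (nrmDual w x • w) := by
  intro J
  rcases J.eq_empty_or_nonempty with rfl | hJ
  · simp
  simpa only [Pi.smul_apply, smul_eq_mul, ← mul_sum] using
    (div_le_iff₀ (sum_range_card_pos hw hJ)).mp (le_nrmDual hx J)

theorem memDual_and_nrmDual_le_one (hw : ∀ k, 0 < w k) (hx : Submajorized (‖x ·‖) w) :
    memDual w x ∧ nrmDual w x ≤ 1 := by
  have h (J : Finset ℕ) : (∑ k ∈ J, ‖x k‖) / (∑ k ∈ range J.card, w k) ≤ 1 := by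
    rcases J.eq_empty_or_nonempty with rfl | hJ
    · simp
    exact (div_le_one (sum_range_card_pos hw hJ)).mpr (hx J)
  exact ⟨⟨1, Set.forall_mem_range.mpr h⟩, ciSup_le h⟩

end dual

section upperBound

variable {w : ℕ → ℝ} {α : ℕ → ℂ} {n : ℕ} {x : Fin n → ℕ → ℂ}

theorem sum_norm_mul_prod_le (hw : ∀ k, 0 < w k) (hwa : Antitone w)
    (hα : ∃ A : ℝ, ∀ k, ‖α k‖ ≤ A) (hx : ∀ i, memDual w (x i)) (F : Finset ℕ) :
    ∑ k ∈ F, ‖α k‖ * ∏ i, ‖x i k‖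
      ≤ (∏ i, nrmDual w (x i)) * ∑ m ∈ range F.card, dRear α m * w m ^ n := by
  have hprod := Submajorized.prod univ (fun i => submajorized_norm_nrmDual_smul hw (hx i))
    (fun i k => norm_nonneg _) (fun i => hwa.const_mul (nrmDual_nonneg (hx i)))
    (fun i m => mul_nonneg (nrmDual_nonneg (hx i)) (hw m).le)
  have h := hprod.mul (submajorized_norm_dRear hα)
    (fun k => by simpa [prod_apply] using prod_nonneg fun i _ => norm_nonneg (x i k))
    (dRear_antitone hα) (dRear_nonneg hα) F
  simp only [Pi.mul_apply, prod_apply, Pi.smul_apply, smul_eq_mul, prod_mul_distrib,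
    prod_const, card_univ, Fintype.card_fin] at h
  refine (h.trans_eq' (sum_congr rfl fun k _ => mul_comm _ _)).trans_eq ?_
  rw [mul_sum]
  exact sum_congr rfl fun m _ => by ring

theorem summable_and_norm_tsum_le (hw : ∀ k, 0 < w k) (hwa : Antitone w)
    (hα : ∃ A : ℝ, ∀ k, ‖α k‖ ≤ A) (hS : Summable fun k => dRear α k * w k ^ n)
    (hx : ∀ i, memDual w (x i)) :
    Summable (fun k => ‖α k‖ * ∏ i, ‖x i k‖) ∧
      ‖∑' k, α k * ∏ i, x i k‖ ≤ (∑' k, dRear α k * w k ^ n) * ∏ i, nrmDual w (x i) := by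
  have hF (F : Finset ℕ) : ∑ k ∈ F, ‖α k‖ * ∏ i, ‖x i k‖
      ≤ (∑' k, dRear α k * w k ^ n) * ∏ i, nrmDual w (x i) := by
    refine (sum_norm_mul_prod_le hw hwa hα hx F).trans ?_
    rw [mul_comm]
    gcongr
    · exact prod_nonneg fun i _ => nrmDual_nonneg (hx i)
    · exact hS.sum_le_tsum _ fun k _ => mul_nonneg (dRear_nonneg hα k) (pow_nonneg (hw k).le n)
  have hnorm (k : ℕ) : ‖α k * ∏ i, x i k‖ = ‖α k‖ * ∏ i, ‖x i k‖ := by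
    rw [norm_mul, norm_prod]
  have hsum : Summable fun k => ‖α k‖ * ∏ i, ‖x i k‖ :=
    summable_of_sum_le (fun k => by rw [← hnorm]; exact norm_nonneg _) hF
  refine ⟨hsum, (norm_tsum_le_tsum_norm (by simpa only [hnorm] using hsum)).trans ?_⟩
  simpa only [hnorm] using hsum.tsum_le_of_sum_le hF

end upperBound

def IsDiagonalFormBound (w : ℕ → ℝ) (α : ℕ → ℂ) (n : ℕ) (C : ℝ) : Prop :=
  ∀ x : Fin n → ℕ → ℂ, (∀ i, memDual w (x i)) →
    ‖∑' k, α k * ∏ i, x i k‖ ≤ C * ∏ i, nrmDual w (x i)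

section lowerBound

variable {w : ℕ → ℝ} {α : ℕ → ℂ} {n : ℕ}

theorem submajorized_norm_extend (hwa : Antitone w) (hw0 : ∀ k, 0 ≤ w k) {N : ℕ}
    {j : Fin N → ℕ} (hj : Function.Injective j) {g : Fin N → ℂ} (hg : ∀ m, ‖g m‖ ≤ w m) :
    Submajorized (‖Function.extend j g 0 ·‖) w := by
  intro J
  set P := J.preimage j hj.injOn
  calc ∑ k ∈ J, ‖Function.extend j g 0 k‖ = ∑ m ∈ P, ‖g m‖ := by
        rw [← sum_preimage j J hj.injOn]
        · simp only [hj.extend_apply]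
          rfl
        · intro k _ hk
          rw [Function.extend_apply' _ _ _ hk, Pi.zero_apply, norm_zero]
    _ ≤ ∑ m ∈ P.map Fin.valEmbedding, w m := by
        rw [sum_map]; exact sum_le_sum fun m _ => hg m
    _ ≤ ∑ m ∈ range (P.map Fin.valEmbedding).card, w m := hwa.submajorized_self _
    _ ≤ ∑ m ∈ range J.card, w m := by
        refine sum_le_sum_of_subset_of_nonneg (range_subset_range.mpr ?_) fun m _ _ => hw0 m
        rw [card_map]
        exact card_le_card_of_injOn j (fun m hm => mem_preimage.mp hm) hj.injOn

variable {C : ℝ}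

theorem sum_range_dRear_sub_mul_pow_le (hw : ∀ k, 0 < w k) (hwa : Antitone w) (hn : n ≠ 0)
    (hC0 : 0 ≤ C) (hC : IsDiagonalFormBound w α n C) (N : ℕ) {ε : ℝ} (hε : 0 < ε) :
    ∑ m ∈ range N, (dRear α m - ε) * w m ^ n ≤ C := by
  obtain ⟨j, hj, hjα⟩ := exists_injective_dRear_sub_lt (α := α) hε N
  choose θ hθ1 hθα using fun k => (α k).exists_norm_eq_one_mul_pow_eq_norm hn
  set x := Function.extend j (fun m => (w m : ℂ) * θ (j m)) 0 with hx
  obtain ⟨hxd, hx1⟩ := memDual_and_nrmDual_le_one hw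
    (submajorized_norm_extend hwa (fun k => (hw k).le) hj (g := fun m => (w m : ℂ) * θ (j m))
      fun m => by rw [norm_mul, hθ1, mul_one, Complex.norm_real, Real.norm_of_nonneg (hw m).le])
  have hval :
      ∑' k, α k * ∏ _i : Fin n, x k = ∑ m : Fin N, ((‖α (j m)‖ * w m ^ n : ℝ) : ℂ) := by
    have : (fun k => α k * ∏ _i : Fin n, x k)
        = Function.extend j (fun m => ((‖α (j m)‖ * w m ^ n : ℝ) : ℂ)) 0 := by
      funext k
      rw [prod_const, card_univ, Fintype.card_fin, hx]
      by_cases hk : ∃ m, j m = k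
      · obtain ⟨m, rfl⟩ := hk
        rw [hj.extend_apply, hj.extend_apply, mul_pow, ← mul_assoc, mul_comm (α _), mul_assoc,
          hθα]
        push_cast
        ring
      · rw [Function.extend_apply' _ _ _ hk, Function.extend_apply' _ _ _ hk]
        simp [hn]
    rw [this, tsum_extend_zero hj, tsum_fintype]
  calc ∑ m ∈ range N, (dRear α m - ε) * w m ^ n = ∑ m : Fin N, (dRear α m - ε) * w m ^ n :=
        (Fin.sum_univ_eq_sum_range (fun m => (dRear α m - ε) * w m ^ n) N).symm
    _ ≤ ∑ m : Fin N, ‖α (j m)‖ * w m ^ n :=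
        sum_le_sum fun m _ => mul_le_mul_of_nonneg_right (hjα m).le (pow_nonneg (hw m).le n)
    _ = ‖∑' k, α k * ∏ _i : Fin n, x k‖ := by
        rw [hval, ← Complex.ofReal_sum, Complex.norm_real, Real.norm_of_nonneg]
        exact sum_nonneg fun m _ => mul_nonneg (norm_nonneg _) (pow_nonneg (hw m).le n)
    _ ≤ C * ∏ _i : Fin n, nrmDual w x := hC (fun _ => x) fun _ => hxd
    _ ≤ C := mul_le_of_le_one_right hC0
        (prod_le_one (fun _ _ => nrmDual_nonneg hxd) fun _ _ => hx1)

theorem sum_range_dRear_mul_pow_le (hw : ∀ k, 0 < w k) (hwa : Antitone w) (hn : n ≠ 0)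
    (hC0 : 0 ≤ C) (hC : IsDiagonalFormBound w α n C) (N : ℕ) :
    ∑ m ∈ range N, dRear α m * w m ^ n ≤ C := by
  have hf : Continuous fun ε : ℝ => ∑ m ∈ range N, (dRear α m - ε) * w m ^ n := by fun_prop
  simpa using le_of_tendsto ((hf.tendsto 0).mono_left nhdsWithin_le_nhds)
    (eventually_nhdsWithin_of_forall (s := Set.Ioi 0) fun ε (hε : 0 < ε) =>
      sum_range_dRear_sub_mul_pow_le hw hwa hn hC0 hC N hε)

end lowerBound

theorem stmt11_general (w : ℕ → ℝ) (hw : ∀ k, 0 < w k) (hwa : Antitone w)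
    (n : ℕ) (hn : 0 < n) (α : ℕ → ℂ) (hα : ∃ A : ℝ, ∀ k, ‖α k‖ ≤ A) :
    ((∃ C : ℝ, 0 < C ∧ ∀ x : Fin n → ℕ → ℂ, (∀ i, memDual w (x i)) →
        Summable (fun k => ‖α k‖ * ∏ i, ‖x i k‖) ∧
        ‖∑' k, α k * ∏ i, x i k‖ ≤ C * ∏ i, nrmDual w (x i)) ↔
      Summable (fun k => dRear α k * w k ^ n))
    ∧ (Summable (fun k => dRear α k * w k ^ n) →
        sInf {C : ℝ | 0 ≤ C ∧ ∀ x : Fin n → ℕ → ℂ, (∀ i, memDual w (x i)) →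
            ‖∑' k, α k * ∏ i, x i k‖ ≤ C * ∏ i, nrmDual w (x i)}
          = ∑' k, dRear α k * w k ^ n) := by
  have hterm (k : ℕ) : 0 ≤ dRear α k * w k ^ n :=
    mul_nonneg (dRear_nonneg hα k) (pow_nonneg (hw k).le n)
  have hS0 : 0 ≤ ∑' k, dRear α k * w k ^ n := tsum_nonneg hterm
  refine ⟨⟨fun ⟨C, hC, hCx⟩ => summable_of_sum_range_le hterm
    (sum_range_dRear_mul_pow_le hw hwa hn.ne' hC.le fun x hx => (hCx x hx).2),
    fun hS => ?_⟩, fun hS => ?_⟩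
  · refine ⟨_, add_pos_of_nonneg_of_pos hS0 one_pos, fun x hx => ?_⟩
    obtain ⟨hsum, hle⟩ := summable_and_norm_tsum_le hw hwa hα hS hx
    refine ⟨hsum, hle.trans (mul_le_mul_of_nonneg_right (le_add_of_nonneg_right zero_le_one)
      (prod_nonneg fun i _ => nrmDual_nonneg (hx i)))⟩
  · have hmem : 0 ≤ ∑' k, dRear α k * w k ^ n ∧
        IsDiagonalFormBound w α n (∑' k, dRear α k * w k ^ n) :=
      ⟨hS0, fun x hx => (summable_and_norm_tsum_le hw hwa hα hS hx).2⟩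
    exact le_antisymm (csInf_le ⟨0, fun C hC => hC.1⟩ hmem)
      (le_csInf ⟨_, hmem⟩ fun C ⟨hC0, hC⟩ =>
        Real.tsum_le_of_sum_range_le hterm (sum_range_dRear_mul_pow_le hw hwa hn.ne' hC0 hC))

/-- Theorem 2(c): a bounded sequence `α` yields a bounded diagonal `n`-linear form on
`d(w,1)*` iff `α ∈ d(wⁿ,1)`, i.e. `∑ α*(k) w(k)ⁿ < ∞`, and the best constant is
`‖α‖_{d(wⁿ,1)} = ∑ α*(k) w(k)ⁿ`. -/
theorem stmt11 (w : ℕ → ℝ) (hw : ∀ k, 0 < w k) (hwa : Antitone w) (hw1 : w 0 = 1)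
    (hw0 : Filter.Tendsto w Filter.atTop (nhds 0)) (hwns : ¬ Summable w)
    (n : ℕ) (hn : 0 < n) (α : ℕ → ℂ) (hα : ∃ A : ℝ, ∀ k, ‖α k‖ ≤ A) :
    ((∃ C : ℝ, 0 < C ∧ ∀ x : Fin n → ℕ → ℂ, (∀ i, memDual w (x i)) →
        Summable (fun k => ‖α k‖ * ∏ i, ‖x i k‖) ∧
        ‖∑' k, α k * ∏ i, x i k‖ ≤ C * ∏ i, nrmDual w (x i)) ↔
      Summable (fun k => dRear α k * w k ^ n))
    ∧ (Summable (fun k => dRear α k * w k ^ n) →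
        sInf {C : ℝ | 0 ≤ C ∧ ∀ x : Fin n → ℕ → ℂ, (∀ i, memDual w (x i)) →
            ‖∑' k, α k * ∏ i, x i k‖ ≤ C * ∏ i, nrmDual w (x i)}
          = ∑' k, dRear α k * w k ^ n) :=
  stmt11_general w hw hwa n hn α hα
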